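/- arXiv:2412.08172 — 4 statements merged into one kernel-verified Lean document; each statement's English description precedes it below -/
import Mathlib

section
/- Let R > 0 be a real number, S a real number with R² - S² ≥ 0 (i.e. the 2×2 matrix [[R, S],[S, R]] is positive semidefinite), and let w₁, w₂ be real numbers. Then for all σ ∈ (0,1): (1/σ) R w₁² + (1/(1-σ)) R w₂² ≥ R w₁² + 2 S w₁ w₂ + R w₂². -/
theorem stmt4 (R S w₁ w₂ : ℝ) (hR : 0 < R) (hRS : R ^ 2 - S ^ 2 ≥ 0)
    (σ : ℝ) (hσ : σ ∈ Set.Ioo (0 : ℝ) 1) :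
    (1 / σ) * R * w₁ ^ 2 + (1 / (1 - σ)) * R * w₂ ^ 2 ≥
      R * w₁ ^ 2 + 2 * S * w₁ * w₂ + R * w₂ ^ 2 := by
  obtain ⟨h1, h2⟩ := hσ
  have h3 : 0 < 1 - σ := by linarith
  rw [ge_iff_le, ← sub_nonneg]
  have key : (1 / σ) * R * w₁ ^ 2 + (1 / (1 - σ)) * R * w₂ ^ 2 -
      (R * w₁ ^ 2 + 2 * S * w₁ * w₂ + R * w₂ ^ 2) =
      ((1 - σ) ^ 2 * R * w₁ ^ 2 + σ ^ 2 * R * w₂ ^ 2 -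
        2 * S * σ * (1 - σ) * w₁ * w₂) / (σ * (1 - σ)) := by
    field_simp
    ring
  rw [key]
  apply div_nonneg _ (by positivity)
  have hRS' : -R ≤ S ∧ S ≤ R := abs_le.mp (by nlinarith [abs_nonneg S, sq_abs S])
  nlinarith [sq_nonneg ((1 - σ) * w₁ - σ * w₂), sq_nonneg ((1 - σ) * w₁ + σ * w₂),
    hRS'.1, hRS'.2, mul_pos h1 h3]
end

section
/- Let Γ ∈ ℝ^{n×n} be symmetric positive definite, S ∈ ℝ^{n×n} any matrix such that the block matrix [[Γ, S],[Sᵀ, Γ]] is positive semidefinite, and let w₁, w₂ ∈ ℝⁿ. Then for all σ ∈ (0,1): (1/σ) w₁ᵀ Γ w₁ + (1/(1-σ)) w₂ᵀ Γ w₂ ≥ w₁ᵀ Γ w₁ + 2 w₁ᵀ S w₂ + w₂ᵀ Γ w₂. -/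
open Matrix

theorem stmt5 (n : ℕ) (Γ S : Matrix (Fin n) (Fin n) ℝ)
    (hΓ : Γ.PosDef) (hblock : (Matrix.fromBlocks Γ S Sᵀ Γ).PosSemidef)
    (w₁ w₂ : Fin n → ℝ) (σ : ℝ) (hσ : σ ∈ Set.Ioo (0 : ℝ) 1) :
    (1 / σ) * (w₁ ⬝ᵥ Γ.mulVec w₁) + (1 / (1 - σ)) * (w₂ ⬝ᵥ Γ.mulVec w₂) ≥
      w₁ ⬝ᵥ Γ.mulVec w₁ + 2 * (w₁ ⬝ᵥ S.mulVec w₂) + w₂ ⬝ᵥ Γ.mulVec w₂ := by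
  obtain ⟨hσ0, hσ1⟩ := hσ
  have h1σ : (0:ℝ) < 1 - σ := by linarith
  set a : ℝ := Real.sqrt ((1 - σ) / σ) with ha
  have hr : (0:ℝ) < (1 - σ) / σ := div_pos h1σ hσ0
  have ha0 : 0 < a := Real.sqrt_pos.mpr hr
  have ha2 : a ^ 2 = (1 - σ) / σ := Real.sq_sqrt hr.le
  set b : ℝ := a⁻¹ with hb
  have hb2 : b ^ 2 = σ / (1 - σ) := by
    rw [hb, inv_pow, ha2, inv_div]
  have hab : a * b = 1 := mul_inv_cancel₀ ha0.ne'
  have key := hblock.dotProduct_mulVec_nonneg (Sum.elim (a • w₁) (-(b • w₂)))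
  rw [fromBlocks_mulVec, star_trivial, sumElim_dotProduct_sumElim] at key
  simp only [Sum.elim_comp_inl, Sum.elim_comp_inr] at key
  have hsym : w₂ ⬝ᵥ Sᵀ.mulVec w₁ = w₁ ⬝ᵥ S.mulVec w₂ := by
    rw [dotProduct_mulVec, vecMul_transpose, dotProduct_comm, dotProduct_mulVec]
  have hexp : (a • w₁) ⬝ᵥ (Γ *ᵥ (a • w₁) + S *ᵥ (-(b • w₂))) +
      (-(b • w₂)) ⬝ᵥ (Sᵀ *ᵥ (a • w₁) + Γ *ᵥ (-(b • w₂))) =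
      a^2 * (w₁ ⬝ᵥ Γ.mulVec w₁) + b^2 * (w₂ ⬝ᵥ Γ.mulVec w₂)
        - 2 * (a*b) * (w₁ ⬝ᵥ S.mulVec w₂) := by
    simp only [dotProduct_add, mulVec_smul, mulVec_neg, dotProduct_neg, neg_dotProduct,
      smul_dotProduct, dotProduct_smul, smul_eq_mul, hsym]
    ring
  rw [hexp, hab, ha2, hb2] at key
  have e1 : 1 / σ = 1 + (1 - σ) / σ := by field_simp; ring
  have e2 : 1 / (1 - σ) = 1 + σ / (1 - σ) := by field_simp; ring
  rw [ge_iff_le, e1, e2]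
  nlinarith [key]
end

section
/- Let δ > 0, 0 ≤ θ₁ ≤ θ ≤ θ₂ with θ₁ < θ₂. Let S be a real number with |S| ≤ 1, and let ϱ : ℝ → ℝ be continuously differentiable. Set Υ₁ = ϱ(t - θ) - ϱ(t - θ₂) and Υ₂ = ϱ(t - θ₁) - ϱ(t - θ). Then ∫_{t-θ₂}^{t-θ₁} e^{δ(θ₁+s-t)} ϱ'(s)² ds ≥ (δ/(e^{δ(θ₂-θ₁)}-1)) (Υ₁² + 2SΥ₁Υ₂ + Υ₂²). -/
lemma jensen_base7 (δ θ₁ t : ℝ) (hδ : 0 < δ) (ϱ ϱ' : ℝ → ℝ)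
    (hϱ : ∀ s, HasDerivAt ϱ (ϱ' s) s) (hϱ' : Continuous ϱ')
    (u v c : ℝ) (huv : u ≤ v) :
    2*c*(ϱ v - ϱ u) - c^2 * (Real.exp (-(δ * (θ₁ + u - t))) - Real.exp (-(δ * (θ₁ + v - t))))/δ
      ≤ ∫ s in u..v, Real.exp (δ * (θ₁ + s - t)) * (ϱ' s)^2 := by
  have hcontK : Continuous (fun s : ℝ => Real.exp (-(δ * (θ₁ + s - t)))) := by continuity
  have hcontW : Continuous (fun s : ℝ => Real.exp (δ * (θ₁ + s - t))) := by continuity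
  have hK : ∀ x ∈ Set.uIcc u v,
      HasDerivAt (fun s => -(1/δ) * Real.exp (-(δ * (θ₁ + s - t))))
        (Real.exp (-(δ * (θ₁ + x - t)))) x := by
    intro x _
    have h1 : HasDerivAt (fun s : ℝ => -(δ * (θ₁ + s - t))) (-δ) x := by
      have := (((hasDerivAt_id x).const_add θ₁).sub_const t).const_mul δ
      simpa [Pi.neg_def] using this.neg
    have h2 := (h1.exp).const_mul (-(1/δ))
    refine h2.congr_deriv ?_
    rw [show -(1/δ) * (Real.exp (-(δ * (θ₁ + x - t))) * -δ) = Real.exp (-(δ * (θ₁ + x - t))) * (δ/δ) by ring, div_self hδ.ne', mul_one]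
  have hintK : ∫ s in u..v, Real.exp (-(δ * (θ₁ + s - t)))
      = (Real.exp (-(δ * (θ₁ + u - t))) - Real.exp (-(δ * (θ₁ + v - t))))/δ := by
    rw [intervalIntegral.integral_eq_sub_of_hasDerivAt hK (hcontK.intervalIntegrable _ _)]
    field_simp
    ring
  have hintϱ : ∫ s in u..v, ϱ' s = ϱ v - ϱ u :=
    intervalIntegral.integral_eq_sub_of_hasDerivAt (fun x _ => hϱ x) (hϱ'.intervalIntegrable _ _)
  have hnn : 0 ≤ ∫ s in u..v,
      Real.exp (δ * (θ₁ + s - t)) * (ϱ' s - c * Real.exp (-(δ * (θ₁ + s - t))))^2 :=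
    intervalIntegral.integral_nonneg huv (fun x _ => by positivity)
  have hid : (∫ s in u..v,
      Real.exp (δ * (θ₁ + s - t)) * (ϱ' s - c * Real.exp (-(δ * (θ₁ + s - t))))^2)
      = (∫ s in u..v, (Real.exp (δ * (θ₁ + s - t)) * (ϱ' s)^2 - 2*c*(ϱ' s)
          + c^2 * Real.exp (-(δ * (θ₁ + s - t))))) := by
    apply intervalIntegral.integral_congr
    intro s _
    have h1 : Real.exp (δ * (θ₁ + s - t)) * Real.exp (-(δ * (θ₁ + s - t))) = 1 := by
      rw [← Real.exp_add]; simp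
    dsimp only
    linear_combination (c^2 * Real.exp (-(δ * (θ₁ + s - t))) - 2*c*ϱ' s) * h1
  have i1 : IntervalIntegrable (fun s => Real.exp (δ * (θ₁ + s - t)) * (ϱ' s)^2) MeasureTheory.volume u v :=
    (by continuity : Continuous fun s => Real.exp (δ * (θ₁ + s - t)) * (ϱ' s)^2).intervalIntegrable _ _
  have i2 : IntervalIntegrable (fun s => 2*c*(ϱ' s)) MeasureTheory.volume u v :=
    (by continuity : Continuous fun s => 2*c*(ϱ' s)).intervalIntegrable _ _
  have i3 : IntervalIntegrable (fun s => c^2 * Real.exp (-(δ * (θ₁ + s - t)))) MeasureTheory.volume u v :=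
    (by continuity : Continuous fun s => c^2 * Real.exp (-(δ * (θ₁ + s - t)))).intervalIntegrable _ _
  rw [hid] at hnn
  rw [intervalIntegral.integral_add (i1.sub i2) i3, intervalIntegral.integral_sub i1 i2,
    intervalIntegral.integral_const_mul, intervalIntegral.integral_const_mul, hintϱ, hintK] at hnn
  rw [mul_div_assoc]
  linarith

set_option maxHeartbeats 1000000 in
theorem stmt7 (δ θ₁ θ θ₂ t S : ℝ) (hδ : 0 < δ)
    (h0 : 0 ≤ θ₁) (h1 : θ₁ ≤ θ) (h2 : θ ≤ θ₂) (h12 : θ₁ < θ₂)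
    (hS : |S| ≤ 1)
    (ϱ ϱ' : ℝ → ℝ) (hϱ : ∀ s, HasDerivAt ϱ (ϱ' s) s) (hϱ' : Continuous ϱ') :
    (∫ s in (t - θ₂)..(t - θ₁), Real.exp (δ * (θ₁ + s - t)) * (ϱ' s) ^ 2) ≥
      (δ / (Real.exp (δ * (θ₂ - θ₁)) - 1)) *
        ((ϱ (t - θ) - ϱ (t - θ₂)) ^ 2 +
          2 * S * (ϱ (t - θ) - ϱ (t - θ₂)) * (ϱ (t - θ₁) - ϱ (t - θ)) +
          (ϱ (t - θ₁) - ϱ (t - θ)) ^ 2) := by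
  obtain ⟨hS1, hS2⟩ := abs_le.1 hS
  set E := Real.exp (δ * (θ₂ - θ₁)) with hE
  set a := Real.exp (δ * (θ - θ₁)) with ha
  have k2 : Real.exp (-(δ * (θ₁ + (t - θ₂) - t))) = E := by
    rw [hE]; congr 1; ring
  have k1 : Real.exp (-(δ * (θ₁ + (t - θ₁) - t))) = 1 := by
    rw [show -(δ * (θ₁ + (t - θ₁) - t)) = (0:ℝ) by ring, Real.exp_zero]
  have km : Real.exp (-(δ * (θ₁ + (t - θ) - t))) = a := by
    rw [ha]; congr 1; ring
  have hEgt : 1 < E := by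
    rw [hE, show (1:ℝ) = Real.exp 0 by simp]
    exact Real.exp_lt_exp.2 (mul_pos hδ (sub_pos.2 h12))
  have haE : a ≤ E := Real.exp_le_exp.2 (by nlinarith)
  have ha1 : 1 ≤ a := by
    rw [ha, show (1:ℝ) = Real.exp 0 by simp]
    exact Real.exp_le_exp.2 (by nlinarith)
  set Υ₁ := ϱ (t - θ) - ϱ (t - θ₂) with hY1
  set Υ₂ := ϱ (t - θ₁) - ϱ (t - θ) with hY2
  rw [ge_iff_le]
  rcases eq_or_lt_of_le h1 with h1e | h1l
  · -- θ₁ = θ : Υ₂ = 0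
    have hYz : Υ₂ = 0 := by rw [hY2, h1e, sub_self]
    have hb := jensen_base7 δ θ₁ t hδ ϱ ϱ' hϱ hϱ' (t - θ₂) (t - θ₁)
      (δ * Υ₁ / (E - 1)) (by linarith)
    rw [k1, k2] at hb
    have hϱeq : ϱ (t - θ₁) - ϱ (t - θ₂) = Υ₁ := by rw [hY1, h1e]
    rw [hϱeq] at hb
    have hEne : E - 1 ≠ 0 := by linarith
    have : 2*(δ * Υ₁ / (E - 1))*Υ₁ - (δ * Υ₁ / (E - 1))^2 * (E - 1)/δ
        = δ / (E - 1) * (Υ₁^2 + 2*S*Υ₁*Υ₂ + Υ₂^2) := by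
      rw [hYz]; field_simp; ring
    linarith
  rcases eq_or_lt_of_le h2 with h2e | h2l
  · -- θ = θ₂ : Υ₁ = 0
    have hYz : Υ₁ = 0 := by rw [hY1, h2e, sub_self]
    have hb := jensen_base7 δ θ₁ t hδ ϱ ϱ' hϱ hϱ' (t - θ₂) (t - θ₁)
      (δ * Υ₂ / (E - 1)) (by linarith)
    rw [k1, k2] at hb
    have hϱeq : ϱ (t - θ₁) - ϱ (t - θ₂) = Υ₂ := by rw [hY2, h2e]
    rw [hϱeq] at hb
    have hEne : E - 1 ≠ 0 := by linarith
    have : 2*(δ * Υ₂ / (E - 1))*Υ₂ - (δ * Υ₂ / (E - 1))^2 * (E - 1)/δ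
        = δ / (E - 1) * (Υ₁^2 + 2*S*Υ₁*Υ₂ + Υ₂^2) := by
      rw [hYz]; field_simp; ring
    linarith
  · -- θ₁ < θ < θ₂
    have hp : 0 < E - a := by
      have : a < E := Real.exp_lt_exp.2 (by nlinarith)
      linarith
    have hq : 0 < a - 1 := by
      have : (1:ℝ) < a := by
        rw [ha, show (1:ℝ) = Real.exp 0 by simp]
        exact Real.exp_lt_exp.2 (mul_pos hδ (sub_pos.2 h1l))
      linarith
    have hsplit : (∫ s in (t - θ₂)..(t - θ₁), Real.exp (δ * (θ₁ + s - t)) * (ϱ' s) ^ 2)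
        = (∫ s in (t - θ₂)..(t - θ), Real.exp (δ * (θ₁ + s - t)) * (ϱ' s) ^ 2)
          + (∫ s in (t - θ)..(t - θ₁), Real.exp (δ * (θ₁ + s - t)) * (ϱ' s) ^ 2) := by
      rw [intervalIntegral.integral_add_adjacent_intervals
        ((by continuity : Continuous fun s => Real.exp (δ * (θ₁ + s - t)) * (ϱ' s)^2).intervalIntegrable _ _)
        ((by continuity : Continuous fun s => Real.exp (δ * (θ₁ + s - t)) * (ϱ' s)^2).intervalIntegrable _ _)]
    have hb1 := jensen_base7 δ θ₁ t hδ ϱ ϱ' hϱ hϱ' (t - θ₂) (t - θ)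
      (δ * Υ₁ / (E - a)) (by linarith)
    rw [k2, km] at hb1
    have hb2 := jensen_base7 δ θ₁ t hδ ϱ ϱ' hϱ hϱ' (t - θ) (t - θ₁)
      (δ * Υ₂ / (a - 1)) (by linarith)
    rw [k1, km] at hb2
    have e1 : 2*(δ * Υ₁ / (E - a))*Υ₁ - (δ * Υ₁ / (E - a))^2 * (E - a)/δ
        = δ * Υ₁^2 / (E - a) := by field_simp; ring
    have e2 : 2*(δ * Υ₂ / (a - 1))*Υ₂ - (δ * Υ₂ / (a - 1))^2 * (a - 1)/δ
        = δ * Υ₂^2 / (a - 1) := by field_simp; ring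
    have halg : δ / (E - 1) * (Υ₁^2 + 2*S*Υ₁*Υ₂ + Υ₂^2)
        ≤ δ * Υ₁^2 / (E - a) + δ * Υ₂^2 / (a - 1) := by
      rw [div_mul_eq_mul_div, div_add_div _ _ (ne_of_gt hp) (ne_of_gt hq),
        div_le_div_iff₀ (by linarith) (by positivity)]
      linarith [mul_nonneg (mul_nonneg hδ.le (by linarith : (0:ℝ) ≤ 1 + S))
          (sq_nonneg ((a-1)*Υ₁ - (E-a)*Υ₂)),
        mul_nonneg (mul_nonneg hδ.le (by linarith : (0:ℝ) ≤ 1 - S))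
          (sq_nonneg ((a-1)*Υ₁ + (E-a)*Υ₂))]
    rw [hsplit]
    calc δ / (E - 1) * (Υ₁^2 + 2*S*Υ₁*Υ₂ + Υ₂^2)
        ≤ δ * Υ₁^2 / (E - a) + δ * Υ₂^2 / (a - 1) := halg
      _ ≤ _ := by rw [← e1, ← e2]; exact add_le_add hb1 hb2
end

section
/- Let c₁ < c₂ and ϱ : [c₁, c₂] → ℝ continuous. Then ∫_{c₁}^{c₂} ϱ(v)² dv ≥ (1/(c₂-c₁)) (∫ϱ)² + (12/(c₂-c₁)³)(∫(v - (c₁+c₂)/2)ϱ)² + (180/(c₂-c₁)⁵)(∫(v² - (c₁+c₂)v + (c₁²+4c₁c₂+c₂²)/6)ϱ)² + (2800/(c₂-c₁)⁷)(∫(v³ - (3(c₁+c₂)/2)v² + (3(c₁²+3c₁c₂+c₂²)/5)v - ((c₁+c₂)(c₁²+8c₁c₂+c₂²)/20))ϱ)², where all integrals are over [c₁, c₂]. -/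
open intervalIntegral MeasureTheory

lemma sqint (a b C0 C1 C2 C3 : ℝ) :
    ∫ v in a..b, (C0 + C1*v + C2*v^2 + C3*v^3)^2 =
      C0^2*(b-a) + C0*C1*(b^2-a^2) + (C1^2+2*C0*C2)*(b^3-a^3)/3
      + (2*C0*C3+2*C1*C2)*(b^4-a^4)/4 + (C2^2+2*C1*C3)*(b^5-a^5)/5
      + C2*C3*(b^6-a^6)/3 + C3^2*(b^7-a^7)/7 := by
  have h : ∀ v : ℝ, HasDerivAt (fun v : ℝ => C0^2*v + C0*C1*v^2 + ((C1^2+2*C0*C2)/3)*v^3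
      + ((2*C0*C3+2*C1*C2)/4)*v^4 + ((C2^2+2*C1*C3)/5)*v^5 + (C2*C3/3)*v^6 + (C3^2/7)*v^7)
      ((C0 + C1*v + C2*v^2 + C3*v^3)^2) v := by
    intro v
    have H := ((((((((hasDerivAt_pow 1 v).const_mul (C0^2)).add
      ((hasDerivAt_pow 2 v).const_mul (C0*C1))).add
      ((hasDerivAt_pow 3 v).const_mul ((C1^2+2*C0*C2)/3))).add
      ((hasDerivAt_pow 4 v).const_mul ((2*C0*C3+2*C1*C2)/4))).add
      ((hasDerivAt_pow 5 v).const_mul ((C2^2+2*C1*C3)/5))).add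
      ((hasDerivAt_pow 6 v).const_mul (C2*C3/3))).add
      ((hasDerivAt_pow 7 v).const_mul (C3^2/7)))
    refine (H.congr_deriv ?_).congr_of_eventuallyEq (Filter.Eventually.of_forall fun w => ?_)
    · push_cast; ring
    · simp only [Pi.add_apply]; ring
  rw [integral_eq_sub_of_hasDerivAt (fun v _ => h v)
      (Continuous.intervalIntegrable (by continuity) _ _)]
  ring

set_option maxHeartbeats 1000000 in
theorem stmt13 (c₁ c₂ : ℝ) (hc : c₁ < c₂)
    (ϱ : ℝ → ℝ) (hϱ : ContinuousOn ϱ (Set.Icc c₁ c₂)) :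
    (∫ v in c₁..c₂, (ϱ v) ^ 2) ≥
      (1 / (c₂ - c₁)) * (∫ v in c₁..c₂, ϱ v) ^ 2 +
      (12 / (c₂ - c₁) ^ 3) * (∫ v in c₁..c₂, (v - (c₁ + c₂) / 2) * ϱ v) ^ 2 +
      (180 / (c₂ - c₁) ^ 5) *
        (∫ v in c₁..c₂,
          (v ^ 2 - (c₁ + c₂) * v + (c₁ ^ 2 + 4 * c₁ * c₂ + c₂ ^ 2) / 6) * ϱ v) ^ 2 +
      (2800 / (c₂ - c₁) ^ 7) *
        (∫ v in c₁..c₂,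
          (v ^ 3 - (3 * (c₁ + c₂) / 2) * v ^ 2 + (3 * (c₁ ^ 2 + 3 * c₁ * c₂ + c₂ ^ 2) / 5) * v -
            (c₁ + c₂) * (c₁ ^ 2 + 8 * c₁ * c₂ + c₂ ^ 2) / 20) * ϱ v) ^ 2 := by
  have hle := hc.le
  have hL : (0:ℝ) < c₂ - c₁ := sub_pos.2 hc
  have hLne : c₂ - c₁ ≠ 0 := hL.ne'
  have hϱu : ContinuousOn ϱ (Set.uIcc c₁ c₂) := by rwa [Set.uIcc_of_le hle]
  set I0 := ∫ v in c₁..c₂, ϱ v with hI0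
  set I1 := ∫ v in c₁..c₂, (v - (c₁ + c₂) / 2) * ϱ v with hI1
  set I2 := ∫ v in c₁..c₂,
      (v ^ 2 - (c₁ + c₂) * v + (c₁ ^ 2 + 4 * c₁ * c₂ + c₂ ^ 2) / 6) * ϱ v with hI2
  set I3 := ∫ v in c₁..c₂,
      (v ^ 3 - (3 * (c₁ + c₂) / 2) * v ^ 2 + (3 * (c₁ ^ 2 + 3 * c₁ * c₂ + c₂ ^ 2) / 5) * v -
        (c₁ + c₂) * (c₁ ^ 2 + 8 * c₁ * c₂ + c₂ ^ 2) / 20) * ϱ v with hI3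
  set a0 := I0 / (c₂ - c₁) with ha0
  set a1 := 12 * I1 / (c₂ - c₁) ^ 3 with ha1
  set a2 := 180 * I2 / (c₂ - c₁) ^ 5 with ha2
  set a3 := 2800 * I3 / (c₂ - c₁) ^ 7 with ha3
  set C0 := a0 - a1 * ((c₁ + c₂) / 2) + a2 * ((c₁ ^ 2 + 4 * c₁ * c₂ + c₂ ^ 2) / 6)
      - a3 * ((c₁ + c₂) * (c₁ ^ 2 + 8 * c₁ * c₂ + c₂ ^ 2) / 20) with hC0
  set C1 := a1 - a2 * (c₁ + c₂) + a3 * (3 * (c₁ ^ 2 + 3 * c₁ * c₂ + c₂ ^ 2) / 5) with hC1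
  set C2 := a2 - a3 * (3 * (c₁ + c₂) / 2) with hC2
  set S : ℝ → ℝ := fun v => C0 + C1 * v + C2 * v ^ 2 + a3 * v ^ 3 with hS
  have hScont : Continuous S := by
    rw [hS]
    exact ((continuous_const.add (continuous_const.mul continuous_id)).add
      (continuous_const.mul (continuous_pow 2))).add (continuous_const.mul (continuous_pow 3))
  have hIntSq : IntervalIntegrable (fun v => ϱ v ^ 2) volume c₁ c₂ :=
    (hϱu.pow 2).intervalIntegrable
  have hIntSϱ : IntervalIntegrable (fun v => S v * ϱ v) volume c₁ c₂ :=
    (hScont.continuousOn.mul hϱu).intervalIntegrable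
  have hIntS2 : IntervalIntegrable (fun v => S v ^ 2) volume c₁ c₂ :=
    ((hScont.pow 2).continuousOn).intervalIntegrable
  have hInt0 : IntervalIntegrable ϱ volume c₁ c₂ := hϱu.intervalIntegrable
  have hInt1 : IntervalIntegrable (fun v => (v - (c₁ + c₂) / 2) * ϱ v) volume c₁ c₂ :=
    ((((continuous_id.sub continuous_const : Continuous fun v : ℝ => v - (c₁ + c₂) / 2)).continuousOn).mul
      hϱu).intervalIntegrable
  have hInt2 : IntervalIntegrable
      (fun v => (v ^ 2 - (c₁ + c₂) * v + (c₁ ^ 2 + 4 * c₁ * c₂ + c₂ ^ 2) / 6) * ϱ v)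
      volume c₁ c₂ :=
    ((((((continuous_pow 2).sub (continuous_const.mul continuous_id)).add continuous_const :
        Continuous fun v : ℝ =>
        v ^ 2 - (c₁ + c₂) * v + (c₁ ^ 2 + 4 * c₁ * c₂ + c₂ ^ 2) / 6)).continuousOn).mul
      hϱu).intervalIntegrable
  have hInt3 : IntervalIntegrable
      (fun v => (v ^ 3 - (3 * (c₁ + c₂) / 2) * v ^ 2 +
        (3 * (c₁ ^ 2 + 3 * c₁ * c₂ + c₂ ^ 2) / 5) * v -
        (c₁ + c₂) * (c₁ ^ 2 + 8 * c₁ * c₂ + c₂ ^ 2) / 20) * ϱ v) volume c₁ c₂ :=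
    (((((((continuous_pow 3).sub (continuous_const.mul (continuous_pow 2))).add
        (continuous_const.mul continuous_id)).sub continuous_const :
        Continuous fun v : ℝ => v ^ 3 - (3 * (c₁ + c₂) / 2) * v ^ 2 +
        (3 * (c₁ ^ 2 + 3 * c₁ * c₂ + c₂ ^ 2) / 5) * v -
        (c₁ + c₂) * (c₁ ^ 2 + 8 * c₁ * c₂ + c₂ ^ 2) / 20)).continuousOn).mul
      hϱu).intervalIntegrable
  have key : (0:ℝ) ≤ ∫ v in c₁..c₂, (ϱ v - S v) ^ 2 :=
    intervalIntegral.integral_nonneg hle (fun v _ => sq_nonneg _)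
  have e1 : (∫ v in c₁..c₂, (ϱ v - S v) ^ 2)
      = (∫ v in c₁..c₂, ϱ v ^ 2) - 2 * (∫ v in c₁..c₂, S v * ϱ v)
        + (∫ v in c₁..c₂, S v ^ 2) := by
    rw [← intervalIntegral.integral_const_mul,
      ← intervalIntegral.integral_sub hIntSq (hIntSϱ.const_mul 2),
      ← intervalIntegral.integral_add (hIntSq.sub (hIntSϱ.const_mul 2)) hIntS2]
    apply intervalIntegral.integral_congr
    intro v _
    simp only [hS]
    ring
  have e2 : (∫ v in c₁..c₂, S v * ϱ v) = a0 * I0 + a1 * I1 + a2 * I2 + a3 * I3 := by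
    rw [hI0, hI1, hI2, hI3,
      ← intervalIntegral.integral_const_mul a0, ← intervalIntegral.integral_const_mul a1,
      ← intervalIntegral.integral_const_mul a2, ← intervalIntegral.integral_const_mul a3,
      ← intervalIntegral.integral_add (hInt0.const_mul a0) (hInt1.const_mul a1),
      ← intervalIntegral.integral_add ((hInt0.const_mul a0).add (hInt1.const_mul a1))
        (hInt2.const_mul a2),
      ← intervalIntegral.integral_add (((hInt0.const_mul a0).add (hInt1.const_mul a1)).add
        (hInt2.const_mul a2)) (hInt3.const_mul a3)]
    apply intervalIntegral.integral_congr
    intro v _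
    simp only [hS, hC0, hC1, hC2]
    ring
  have e3 : (∫ v in c₁..c₂, S v ^ 2)
      = C0^2*(c₂-c₁) + C0*C1*(c₂^2-c₁^2) + (C1^2+2*C0*C2)*(c₂^3-c₁^3)/3
      + (2*C0*a3+2*C1*C2)*(c₂^4-c₁^4)/4 + (C2^2+2*C1*a3)*(c₂^5-c₁^5)/5
      + C2*a3*(c₂^6-c₁^6)/3 + a3^2*(c₂^7-c₁^7)/7 := by
    simp only [hS]
    exact sqint c₁ c₂ C0 C1 C2 a3
  rw [e1, e2, e3] at key
  have horth : C0^2*(c₂-c₁) + C0*C1*(c₂^2-c₁^2) + (C1^2+2*C0*C2)*(c₂^3-c₁^3)/3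
      + (2*C0*a3+2*C1*C2)*(c₂^4-c₁^4)/4 + (C2^2+2*C1*a3)*(c₂^5-c₁^5)/5
      + C2*a3*(c₂^6-c₁^6)/3 + a3^2*(c₂^7-c₁^7)/7
      = a0^2*(c₂-c₁) + a1^2*(c₂-c₁)^3/12 + a2^2*(c₂-c₁)^5/180
        + a3^2*(c₂-c₁)^7/2800 := by
    rw [hC0, hC1, hC2]
    ring
  have t0 : 2*(a0*I0) - a0^2*(c₂-c₁) = 1/(c₂-c₁)*I0^2 := by
    rw [ha0]; field_simp; ring
  have t1 : 2*(a1*I1) - a1^2*(c₂-c₁)^3/12 = 12/(c₂-c₁)^3*I1^2 := by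
    rw [ha1]; field_simp; ring
  have t2 : 2*(a2*I2) - a2^2*(c₂-c₁)^5/180 = 180/(c₂-c₁)^5*I2^2 := by
    rw [ha2]; field_simp; ring
  have t3 : 2*(a3*I3) - a3^2*(c₂-c₁)^7/2800 = 2800/(c₂-c₁)^7*I3^2 := by
    rw [ha3]; field_simp; ring
  linarith [key, horth, t0, t1, t2, t3]
end
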